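/- On the hexagonal lattice, if every vertex of a configuration σ is in state H (exactly two occupied incident faces), then σ is determined by its restriction to any single vertex's three incident faces; consequently there are exactly 3 such configurations, and each is periodic with respect to a sublattice of index 3. -/

import Mathlib

/-!
Two adjacent triangles share two faces, so under the two-out-of-three rule their third faces
agree: `σ (i + 1, j + 1) = σ (i, j)`. Along a row, two overlapping windows of three consecutive
faces both contain exactly two occupied faces, so `σ (i + 3, j) = σ (i, j)`. Hence `σ` is
constant on the classes of `i - j` modulo 3, which are represented by the three faces
`(0, 0)`, `(1, 0)`, `(0, 1)` around one vertex, and among these exactly one is empty.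
-/

def allH (σ : ℤ × ℤ → Bool) : Prop :=
  ∀ i j : ℤ,
    ((if σ (i, j) then 1 else 0) + (if σ (i + 1, j) then 1 else 0)
      + (if σ (i, j + 1) then 1 else 0) = (2 : ℕ)) ∧
    ((if σ (i + 1, j + 1) then 1 else 0) + (if σ (i + 1, j) then 1 else 0)
      + (if σ (i, j + 1) then 1 else 0) = (2 : ℕ))

def sublatticeComplement (c : ZMod 3) (p : ℤ × ℤ) : Bool :=
  decide (((p.1 - p.2 : ℤ) : ZMod 3) ≠ c)

theorem allH_sublatticeComplement (c : ZMod 3) : allH (sublatticeComplement c) := by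
  intro i j
  simp only [sublatticeComplement]
  push_cast
  generalize (i : ZMod 3) = a, (j : ZMod 3) = b
  revert a b c
  decide

theorem sublatticeComplement_eq_of_apply_vertex {c c' : ZMod 3}
    (h₀ : sublatticeComplement c (0, 0) = sublatticeComplement c' (0, 0))
    (h₁ : sublatticeComplement c (1, 0) = sublatticeComplement c' (1, 0))
    (h₂ : sublatticeComplement c (0, 1) = sublatticeComplement c' (0, 1)) : c = c' := by
  simp only [sublatticeComplement] at h₀ h₁ h₂
  push_cast at h₀ h₁ h₂
  revert c c'
  decide

theorem sublatticeComplement_injective : Function.Injective sublatticeComplement :=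
  fun _ _ h => sublatticeComplement_eq_of_apply_vertex
    (congrFun h _) (congrFun h _) (congrFun h _)

theorem exists_vertexFace_intCast_sub_eq (p : ℤ × ℤ) :
    ∃ q ∈ ({(0, 0), (1, 0), (0, 1)} : Set (ℤ × ℤ)),
      ((p.1 - p.2 : ℤ) : ZMod 3) = ((q.1 - q.2 : ℤ) : ZMod 3) := by
  simp only [Set.mem_insert_iff, Set.mem_singleton_iff, exists_eq_or_imp, exists_eq_left]
  generalize ((p.1 - p.2 : ℤ) : ZMod 3) = r
  revert r
  decide

namespace allH

variable {σ : ℤ × ℤ → Bool}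

theorem apply_add_one_add_one (h : allH σ) (i j : ℤ) : σ (i + 1, j + 1) = σ (i, j) := by
  obtain ⟨hup, hdown⟩ := h i j
  revert hup hdown
  cases σ (i + 1, j + 1) <;> cases σ (i, j) <;> cases σ (i + 1, j) <;> cases σ (i, j + 1) <;>
    simp

theorem apply_add_three (h : allH σ) (i j : ℤ) : σ (i + 3, j) = σ (i, j) := by
  have hwindow : ∀ k, ((if σ (k, j) then 1 else 0) + (if σ (k + 1, j) then 1 else 0)
      + (if σ (k + 2, j) then 1 else 0) = (2 : ℕ)) := by
    intro k
    have hup := (h (k + 1) j).1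
    rw [h.apply_add_one_add_one, show k + 1 + 1 = k + 2 by ring] at hup
    omega
  have h₀ := hwindow i
  have h₁ := hwindow (i + 1)
  rw [show i + 1 + 1 = i + 2 by ring, show i + 1 + 2 = i + 3 by ring] at h₁
  revert h₀ h₁
  cases σ (i + 3, j) <;> cases σ (i, j) <;> simp <;> omega

theorem apply_eq_apply_sub (h : allH σ) (i j : ℤ) : σ (i, j) = σ (i - j, 0) := by
  have hdiag : Function.Periodic (fun k : ℤ => σ (i - j + k, k)) 1 := fun k => by
    simpa only [add_assoc] using h.apply_add_one_add_one (i - j + k) k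
  simpa using hdiag.int_mul_eq j

theorem apply_eq_of_intCast_sub_eq (h : allH σ) {p q : ℤ × ℤ}
    (hpq : ((p.1 - p.2 : ℤ) : ZMod 3) = ((q.1 - q.2 : ℤ) : ZMod 3)) : σ p = σ q := by
  obtain ⟨m, hm⟩ := (ZMod.intCast_eq_intCast_iff_dvd_sub _ _ 3).1 hpq
  have hrow : Function.Periodic (fun k : ℤ => σ (k, 0)) 3 := fun k => h.apply_add_three k 0
  rw [h.apply_eq_apply_sub, h.apply_eq_apply_sub q.1, ← hrow.sub_int_mul_eq (x := q.1 - q.2) m]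
  congr 2
  push_cast at hm ⊢
  omega

theorem ext {τ : ℤ × ℤ → Bool} (hσ : allH σ) (hτ : allH τ) (h₀ : σ (0, 0) = τ (0, 0))
    (h₁ : σ (1, 0) = τ (1, 0)) (h₂ : σ (0, 1) = τ (0, 1)) : σ = τ := by
  funext p
  obtain ⟨q, hq, hpq⟩ := exists_vertexFace_intCast_sub_eq p
  rw [hσ.apply_eq_of_intCast_sub_eq hpq, hτ.apply_eq_of_intCast_sub_eq hpq]
  rcases hq with rfl | rfl | rfl <;> assumption

theorem exists_eq_sublatticeComplement (h : allH σ) : ∃ c, σ = sublatticeComplement c := by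
  have hvertex := (h 0 0).1
  simp only [zero_add] at hvertex
  obtain ⟨c, h₀, h₁, h₂⟩ : ∃ c, σ (0, 0) = sublatticeComplement c (0, 0) ∧
      σ (1, 0) = sublatticeComplement c (1, 0) ∧ σ (0, 1) = sublatticeComplement c (0, 1) := by
    simp only [sublatticeComplement]
    push_cast
    revert hvertex
    generalize σ (0, 0) = a, σ (1, 0) = b, σ (0, 1) = d
    revert a b d
    decide
  exact ⟨c, h.ext (allH_sublatticeComplement c) h₀ h₁ h₂⟩

end allH

theorem setOf_allH_eq_range : {σ | allH σ} = Set.range sublatticeComplement := by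
  ext σ
  exact ⟨fun h => h.exists_eq_sublatticeComplement.imp fun _ => Eq.symm,
    by rintro ⟨c, rfl⟩; exact allH_sublatticeComplement c⟩

/-- An all-H configuration is determined by its restriction to the three faces
incident to a single vertex; there are exactly 3 such configurations, and each
is periodic with respect to an index-3 sublattice of ℤ² (the one generated by
(1,1) and (3,0)). -/
theorem stmt_16 :
    (∀ σ τ : ℤ × ℤ → Bool, allH σ → allH τ →
      σ (0, 0) = τ (0, 0) → σ (1, 0) = τ (1, 0) → σ (0, 1) = τ (0, 1) → σ = τ) ∧
    Set.ncard {σ : ℤ × ℤ → Bool | allH σ} = 3 ∧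
    (∀ σ : ℤ × ℤ → Bool, allH σ → ∀ x y : ℤ,
      σ (x + 1, y + 1) = σ (x, y) ∧ σ (x + 3, y) = σ (x, y)) := by
  refine ⟨fun σ τ hσ hτ => hσ.ext hτ, ?_,
    fun σ h x y => ⟨h.apply_add_one_add_one x y, h.apply_add_three x y⟩⟩
  rw [setOf_allH_eq_range, Set.ncard_range_of_injective sublatticeComplement_injective,
    Nat.card_eq_fintype_card, ZMod.card]
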